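/- Let r, s, t be positive real numbers, let λ, μ, ν be nonzero real numbers, and let P, Q, R, c be real numbers. Set N = rλ + sμ + tν and suppose N ≠ 0. If rλP + sμQ + tνR = 0, rλP² + sμQ² + tνR² = −(1/2)·c·N, rλP³ + sμQ³ + tνR³ = 0, rλP⁴ + sμQ⁴ + tνR⁴ = (3/8)·c²·N, and rλP⁵ + sμQ⁵ + tνR⁵ = 0, then P·Q·R = 0. -/

import Mathlib

/-!
`P`, `Q`, `R` are the roots of `x³ - e₁x² + e₂x - e₃` with `e₁ = P + Q + R`, `e₃ = PQR`, so the
weighted power sums `S k = rλPᵏ + sμQᵏ + tνRᵏ` (with `S 0 = N`) satisfy the Newton recurrence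
`S (k + 3) = e₁ S (k + 2) - e₂ S (k + 1) + e₃ S k`. Since the odd sums vanish, the recurrence at
`k = 0` and `k = 2` gives `e₃ = c e₁ / 2` and `c (3 c e₁ - 4 e₃) = 0` after cancelling `N`; together
these force `c² e₁ = 0`, hence `c e₁ = 0` and `e₃ = 0`.
-/

section WeightedPowerSum

variable {A : Type*} [CommRing A]

def weightedPowerSum₃ (a b c x y z : A) (k : ℕ) : A :=
  a * x ^ k + b * y ^ k + c * z ^ k

theorem weightedPowerSum₃_add_three (a b c x y z : A) (k : ℕ) :
    weightedPowerSum₃ a b c x y z (k + 3) =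
      (x + y + z) * weightedPowerSum₃ a b c x y z (k + 2)
        - (x * y + y * z + z * x) * weightedPowerSum₃ a b c x y z (k + 1)
        + x * y * z * weightedPowerSum₃ a b c x y z k := by
  unfold weightedPowerSum₃
  ring

end WeightedPowerSum

theorem stmt_8_general (r s t lam mu nu P Q R c : ℝ)
    (N : ℝ) (hN : N = r * lam + s * mu + t * nu) (hN0 : N ≠ 0)
    (h1 : r * lam * P + s * mu * Q + t * nu * R = 0)
    (h2 : r * lam * P ^ 2 + s * mu * Q ^ 2 + t * nu * R ^ 2 = -(1 / 2) * c * N)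
    (h3 : r * lam * P ^ 3 + s * mu * Q ^ 3 + t * nu * R ^ 3 = 0)
    (h4 : r * lam * P ^ 4 + s * mu * Q ^ 4 + t * nu * R ^ 4 = (3 / 8) * c ^ 2 * N)
    (h5 : r * lam * P ^ 5 + s * mu * Q ^ 5 + t * nu * R ^ 5 = 0) :
    P * Q * R = 0 := by
  have rec0 := weightedPowerSum₃_add_three (r * lam) (s * mu) (t * nu) P Q R 0
  have rec2 := weightedPowerSum₃_add_three (r * lam) (s * mu) (t * nu) P Q R 2
  simp only [weightedPowerSum₃, pow_zero, pow_one, mul_one, zero_add, Nat.reduceAdd] at rec0 rec2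
  rw [h1, h2, h3, ← hN] at rec0
  rw [h2, h3, h4, h5] at rec2
  set e₁ := P + Q + R
  have he₃N : (P * Q * R - c * e₁ / 2) * N = 0 := by linear_combination -rec0
  have hcN : c * (3 * c * e₁ - 4 * (P * Q * R)) * N = 0 := by linear_combination -8 * rec2
  have he₃ : P * Q * R = c * e₁ / 2 := by linarith [(mul_eq_zero.mp he₃N).resolve_right hN0]
  have hc_sq : c * (c * e₁) = 0 := by
    linear_combination (mul_eq_zero.mp hcN).resolve_right hN0 + 4 * c * he₃
  have hce₁ : c * e₁ = 0 := pow_eq_zero_iff two_ne_zero |>.mp (by linear_combination e₁ * hc_sq)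
  rw [he₃, hce₁, zero_div]

/-- The conclusion of Case (1) of the proof of Theorem 1.2 of the paper: under the
identities of Lemma 3.3 for `q = 1, …, 5`, at least one of `P, Q, R` vanishes. -/
theorem stmt_8 (r s t lam mu nu P Q R c : ℝ)
    (hr : 0 < r) (hs : 0 < s) (ht : 0 < t)
    (hlam : lam ≠ 0) (hmu : mu ≠ 0) (hnu : nu ≠ 0)
    (N : ℝ) (hN : N = r * lam + s * mu + t * nu) (hN0 : N ≠ 0)
    (h1 : r * lam * P + s * mu * Q + t * nu * R = 0)
    (h2 : r * lam * P ^ 2 + s * mu * Q ^ 2 + t * nu * R ^ 2 = -(1 / 2) * c * N)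
    (h3 : r * lam * P ^ 3 + s * mu * Q ^ 3 + t * nu * R ^ 3 = 0)
    (h4 : r * lam * P ^ 4 + s * mu * Q ^ 4 + t * nu * R ^ 4 = (3 / 8) * c ^ 2 * N)
    (h5 : r * lam * P ^ 5 + s * mu * Q ^ 5 + t * nu * R ^ 5 = 0) :
    P * Q * R = 0 :=
  stmt_8_general r s t lam mu nu P Q R c N hN hN0 h1 h2 h3 h4 h5
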